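/- Conversely, if a probability distribution π̃ on I ∪ ℰ satisfies π̃ᵀ = π̃ᵀ P^{π̃} (where P^{π̃}(i,b) = P(i,b) for i ∈ I and P^{π̃}(ε,b) = π̃(b) for ε ∈ ℰ), and π̃ is strictly positive on I, then μ := π̃_I / π̃(I) is a quasi-stationary distribution of P_I with eigenvalue γ = 1 - π̃(ℰ), and π̃(ε) = ∑_{i∈I} μ(i)P(i,ε) for all ε ∈ ℰ. -/

import Mathlib

/-!
Reading off column `b` of `π̃ᵀ = π̃ᵀ P^{π̃}`, the rows in `ℰ` contribute `π̃(ℰ) π̃(b)`, so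
`∑_{i ∈ I} π̃(i) P(i, b) = (1 - π̃(ℰ)) π̃(b) = π̃(I) π̃(b)`. Dividing by `π̃(I)` gives, for `b ∈ I`,
the eigenvector equation `μᵀ P_I = π̃(I) μᵀ`, and for `b = ε ∈ ℰ` the formula for `π̃(ε)`.
Summing the latter over `ℰ` shows `π̃(ℰ) = ∑_i μ(i) P(i, ℰ) > 0`, since `μ > 0` and some
`P(i, ℰ) > 0`; hence `γ = π̃(I) = 1 - π̃(ℰ)` lies in `(0, 1)`.
-/

open Finset Matrix

theorem sum_inl_mul_eq_of_vecMul_eq_self {I E R : Type*} [Fintype I] [Fintype E] [CommRing R]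
    {π : I ⊕ E → R} {Q : Matrix (I ⊕ E) (I ⊕ E) R} (hπ1 : ∑ a, π a = 1)
    (hQE : ∀ ε b, Q (Sum.inr ε) b = π b) (hstat : π ᵥ* Q = π) (b : I ⊕ E) :
    ∑ i, π (Sum.inl i) * Q (Sum.inl i) b = (∑ i, π (Sum.inl i)) * π b := by
  have hcol := congrFun hstat b
  simp only [vecMul, dotProduct, Fintype.sum_sum_type, hQE, ← Finset.sum_mul] at hcol
  rw [Fintype.sum_sum_type] at hπ1
  linear_combination hcol - π b * hπ1

theorem sum_div_sum_mul_eq {ι 𝕜 : Type*} [Fintype ι] [Field 𝕜] {w A : ι → 𝕜} {c : 𝕜}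
    (hw : ∑ i, w i ≠ 0) (h : ∑ i, w i * A i = (∑ i, w i) * c) :
    ∑ i, w i / (∑ i', w i') * A i = c := by
  simp_rw [div_mul_eq_mul_div, ← Finset.sum_div, h, mul_div_cancel_left₀ _ hw]

theorem sum_sum_mul_pos {ι κ : Type*} [Fintype ι] [Fintype κ] {μ : ι → ℝ} {A : ι → κ → ℝ}
    (hμ : ∀ i, 0 < μ i) (hA : ∀ i k, 0 ≤ A i k) (hmass : 0 < ∑ i, ∑ k, A i k) :
    0 < ∑ k, ∑ i, μ i * A i k := by
  rw [Finset.sum_comm]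
  simp_rw [← Finset.mul_sum]
  obtain ⟨i, -, hi⟩ : ∃ i ∈ univ, (0 : ℝ) < ∑ k, A i k :=
    exists_lt_of_sum_lt (by simpa using hmass)
  exact Finset.sum_pos' (fun j _ => mul_nonneg (hμ j).le (Finset.sum_nonneg fun k _ => hA j k))
    ⟨i, mem_univ i, mul_pos (hμ i) hi⟩

theorem stationary_for_Ppi_gives_qsd {I E : Type*} [Fintype I] [Fintype E]
    [Nonempty I]
    (P : Matrix (I ⊕ E) (I ⊕ E) ℝ)
    (PI : Matrix I I ℝ) (hPI : PI = P.submatrix Sum.inl Sum.inl)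
    (hP0 : ∀ a b, 0 ≤ P a b)
    (hsub : 0 < ∑ i : I, ∑ ε : E, P (Sum.inl i) (Sum.inr ε))
    (πt : I ⊕ E → ℝ)
    (hπt1 : ∑ a, πt a = 1)
    (hπtpos : ∀ i : I, 0 < πt (Sum.inl i))
    (Pπt : Matrix (I ⊕ E) (I ⊕ E) ℝ)
    (hPπtI : ∀ (i : I) (b : I ⊕ E), Pπt (Sum.inl i) b = P (Sum.inl i) b)
    (hPπtE : ∀ (ε : E) (b : I ⊕ E), Pπt (Sum.inr ε) b = πt b)
    (hstat : πt ᵥ* Pπt = πt) :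
    (∑ i : I, (πt (Sum.inl i) / ∑ i' : I, πt (Sum.inl i')) = 1)
    ∧ ((fun i : I => πt (Sum.inl i) / ∑ i' : I, πt (Sum.inl i')) ᵥ* PI
        = (1 - ∑ ε : E, πt (Sum.inr ε))
          • fun i : I => πt (Sum.inl i) / ∑ i' : I, πt (Sum.inl i'))
    ∧ (0 < 1 - ∑ ε : E, πt (Sum.inr ε)) ∧ (1 - ∑ ε : E, πt (Sum.inr ε) < 1)
    ∧ ∀ ε : E, πt (Sum.inr ε)
        = ∑ i : I, (πt (Sum.inl i) / ∑ i' : I, πt (Sum.inl i')) * P (Sum.inl i) (Sum.inr ε) := by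
  set s := ∑ i, πt (Sum.inl i)
  have hs : 0 < s := Finset.sum_pos (fun i _ => hπtpos i) univ_nonempty
  have hcol (b : I ⊕ E) : ∑ i, πt (Sum.inl i) * P (Sum.inl i) b = s * πt b := by
    simpa only [hPπtI] using sum_inl_mul_eq_of_vecMul_eq_self hπt1 hPπtE hstat b
  have hexit (ε : E) : πt (Sum.inr ε) = ∑ i, πt (Sum.inl i) / s * P (Sum.inl i) (Sum.inr ε) :=
    (sum_div_sum_mul_eq hs.ne' (hcol _)).symm
  have hexit_pos : 0 < ∑ ε, πt (Sum.inr ε) := by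
    simp_rw [hexit]
    exact sum_sum_mul_pos (fun i => div_pos (hπtpos i) hs) (fun _ _ => hP0 _ _) hsub
  have hγ : 1 - ∑ ε, πt (Sum.inr ε) = s := by
    rw [Fintype.sum_sum_type] at hπt1
    linarith
  refine ⟨by rw [← Finset.sum_div, div_self hs.ne'], ?_, hγ ▸ hs, by linarith, hexit⟩
  funext j
  rw [hγ, Pi.smul_apply, smul_eq_mul, mul_div_cancel₀ _ hs.ne', hPI]
  exact sum_div_sum_mul_eq hs.ne' (hcol _)
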